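/- arXiv:2403.19328 — 4 statements merged into one kernel-verified Lean document; each statement's English description precedes it below -/
import Mathlib

section
/- For every real μ > −1 and every ω > 0, the Abel limit of ∫₀^∞ x^μ e^{iωx} dx exists and equals Γ(μ+1) ω^{−(μ+1)} e^{i(μ+1)π/2}; that is, lim_{s→0⁺} ∫₀^∞ x^μ e^{(iω−s)x} dx = Γ(μ+1) e^{i(μ+1)π/2} / ω^{μ+1}. -/
open MeasureTheory Filter Set Polynomial
open scoped Classical

noncomputable section

/-- The Abel limit of `∫₀^∞ g(x) dx` is `L`: for every `s > 0` the integral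
`∫₀^∞ e^{-s x} g(x) dx` converges and these integrals tend to `L` as `s → 0⁺`. -/
def HasAbelLimit (g : ℝ → ℂ) (L : ℂ) : Prop :=
  (∀ s : ℝ, 0 < s →
    IntegrableOn (fun x : ℝ => Complex.exp (-(s : ℂ) * (x : ℂ)) * g x) (Set.Ioi 0)) ∧
  Tendsto (fun s : ℝ => ∫ x in Set.Ioi (0:ℝ), Complex.exp (-(s : ℂ) * (x : ℂ)) * g x)
    (nhdsWithin 0 (Set.Ioi 0)) (nhds L)

/-- Bessel function of the first kind of order `ν`, for `x > 0`, with the convention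
`1/Γ(z) = 0` at nonpositive integers `z` (automatic since `Real.Gamma` vanishes there). -/
def besselJ (ν x : ℝ) : ℝ :=
  ∑' k : ℕ, ((-1 : ℝ) ^ k / ((k.factorial : ℝ) * Real.Gamma (ν + k + 1))) *
    (x / 2) ^ (ν + 2 * (k : ℝ))

/-- Modified Bessel function of the second kind of order `ν`, for `x > 0`. -/
def besselK (ν x : ℝ) : ℝ :=
  ∫ t in Set.Ioi (0:ℝ), Real.exp (-x * Real.cosh t) * Real.cosh (ν * t)

/-- The weight function `w_{μ,ν}` on `(0,∞)`. -/
def weightW (μ ν : ℝ) (x : ℝ) : ℝ :=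
  if ∃ m : ℤ, μ - ν = 2 * m then (1/2) * x ^ ((μ - 1)/2) * besselK ν (Real.sqrt x)
  else (1/2) * x ^ (μ/2) * besselK ν (Real.sqrt x)

/-- `0 < x_1 < ⋯ < x_n` together with positive weights `w_1, …, w_n` form an `n`-point
Gaussian quadrature rule for `w_{μ,ν}`. -/
def IsGaussRule (μ ν : ℝ) (n : ℕ) (xs ws : Fin n → ℝ) : Prop :=
  StrictMono xs ∧ (∀ j, 0 < xs j) ∧ (∀ j, 0 < ws j) ∧
  ∀ p : Polynomial ℝ, p.natDegree ≤ 2 * n - 1 →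
    ∑ j, ws j * p.eval (xs j) = ∫ x in Set.Ioi (0:ℝ), weightW μ ν x * p.eval x

/-- `κ = μ` if `μ - ν` is even and `κ = μ + 1` if `μ - ν` is odd. -/
def kappaQ (μ ν : ℕ) : ℝ := if Even (μ - ν) then (μ : ℝ) else (μ : ℝ) + 1

/-- The boundary weights `ŵ_k⁰` of the generalized Gauss–Radau rule. -/
def wHat0 (μ ν : ℕ) {n : ℕ} (xs ws : Fin n → ℝ) (k : ℕ) : ℝ :=
  (1 / (k.factorial : ℝ)) *
    (2 ^ k * Real.Gamma (((ν : ℝ) + k + 1)/2) / Real.Gamma (((ν : ℝ) - k + 1)/2)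
      - (2 / Real.pi) * Real.cos (((k : ℝ) - ν) * Real.pi / 2) *
          ∑ j, ws j * (xs j) ^ (((k : ℝ) - kappaQ μ ν)/2))

/-- The generalized Gauss–Radau rule `(Q_{2n,μ} f)(ω)`. -/
def QRule (μ ν : ℕ) {n : ℕ} (xs ws : Fin n → ℝ) (f : ℂ → ℂ) (ω : ℝ) : ℂ :=
  (1 / (ω : ℂ)) *
    ((∑ k ∈ Finset.range μ, (wHat0 μ ν xs ws k : ℂ) / (ω : ℂ) ^ k * iteratedDeriv k f 0)
      + ∑ j, ((ws j * (xs j) ^ (-(kappaQ μ ν)/2) / Real.pi : ℝ) : ℂ) *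
          (Complex.exp (-(ν : ℂ) * (Real.pi : ℂ) * Complex.I / 2) *
              f (Complex.I * (Real.sqrt (xs j) : ℂ) / (ω : ℂ))
            + Complex.exp ((ν : ℂ) * (Real.pi : ℂ) * Complex.I / 2) *
              f (-Complex.I * (Real.sqrt (xs j) : ℂ) / (ω : ℂ))))

/-- `P` is a monic polynomial of degree `m` orthogonal with respect to `x^μ J_ν(x)`
on `(0,∞)`, all integrals taken in the Abel-limit sense. -/
def MonicOrthoBessel (μ ν : ℝ) (m : ℕ) (P : Polynomial ℂ) : Prop :=
  P.Monic ∧ P.natDegree = m ∧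
  ∀ k < m, HasAbelLimit
    (fun x : ℝ => P.eval (x : ℂ) * ((x ^ ((k : ℝ) + μ) : ℝ) : ℂ) * (besselJ ν x : ℂ)) 0

/-- `φ` is the monic real polynomial of degree `m` orthogonal to all lower powers
with respect to the weight `w_{μ,ν}` on `(0,∞)`. -/
def IsMonicOrthoW (μ ν : ℝ) (m : ℕ) (φ : Polynomial ℝ) : Prop :=
  φ.Monic ∧ φ.natDegree = m ∧
  ∀ k < m, ∫ x in Set.Ioi (0:ℝ), weightW μ ν x * φ.eval x * x ^ k = 0


/-! For `Re b > 0` one has `∫₀^∞ t^(a-1) e^(-b t) dt = Γ(a) (1/b)^a`: both sides are holomorphic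
in `b` on the right half-plane and agree on the positive reals, where this is the Gamma integral.
The Abel-regularised integral of `x^(a-1) e^(iωx)` is this Laplace transform at `b = s - iω`, and
as `s → 0⁺` the right-hand side tends to its value at `b = -iω`, namely `Γ(a) e^(iπa/2) / ω^a`. -/

namespace Complex

open Topology

lemma norm_cpow_mul_exp_neg_mul_ofReal (a b : ℂ) {t : ℝ} (ht : 0 < t) :
    ‖(t : ℂ) ^ a * exp (-(b * t))‖ = t ^ a.re * Real.exp (-(b.re * t)) := by
  rw [norm_mul, norm_cpow_eq_rpow_re_of_pos ht, norm_exp, neg_re, re_mul_ofReal]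

lemma integrableOn_cpow_mul_exp_neg_mul_Ioi {a b : ℂ} (ha : -1 < a.re) (hb : 0 < b.re) :
    IntegrableOn (fun t : ℝ => (t : ℂ) ^ a * exp (-(b * t))) (Ioi 0) := by
  have hdom : IntegrableOn (fun t : ℝ => t ^ a.re * Real.exp (-(b.re * t))) (Ioi 0) := by
    simpa [Real.rpow_one] using integrableOn_rpow_mul_exp_neg_mul_rpow ha zero_lt_one hb
  refine hdom.mono' (by fun_prop : Measurable _).aestronglyMeasurable ?_
  filter_upwards [ae_restrict_mem measurableSet_Ioi] with t ht
  exact (norm_cpow_mul_exp_neg_mul_ofReal a b ht).le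

lemma differentiableOn_integral_cpow_mul_exp_neg_mul_Ioi {a : ℂ} (ha : -1 < a.re) :
    DifferentiableOn ℂ (fun b : ℂ => ∫ t in Ioi (0 : ℝ), (t : ℂ) ^ a * exp (-(b * t)))
      {b | 0 < b.re} := by
  intro b₀ hb₀
  obtain ⟨ε, hε, hεb₀⟩ := exists_between (show 0 < b₀.re from hb₀)
  have hnhds : {b : ℂ | ε < b.re} ∈ 𝓝 b₀ :=
    (continuous_re.isOpen_preimage _ isOpen_Ioi).mem_nhds hεb₀
  have hmeas : ∀ (c : ℂ) (b : ℂ), AEStronglyMeasurable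
      (fun t : ℝ => (t : ℂ) ^ c * exp (-(b * t))) (volume.restrict (Ioi 0)) :=
    fun c b => (by fun_prop : Measurable _).aestronglyMeasurable
  have hbound : ∀ᵐ t : ℝ ∂volume.restrict (Ioi 0), ∀ b ∈ {b : ℂ | ε < b.re},
      ‖-((t : ℂ) ^ (a + 1) * exp (-(b * t)))‖ ≤ t ^ (a.re + 1) * Real.exp (-(ε * t)) := by
    filter_upwards [ae_restrict_mem measurableSet_Ioi] with t (ht : 0 < t) b (hb : ε < b.re)
    rw [norm_neg, norm_cpow_mul_exp_neg_mul_ofReal _ _ ht, add_re, one_re]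
    gcongr
  have hderiv : ∀ᵐ t : ℝ ∂volume.restrict (Ioi 0), ∀ b ∈ {b : ℂ | ε < b.re},
      HasDerivAt (fun b : ℂ => (t : ℂ) ^ a * exp (-(b * t)))
        (-((t : ℂ) ^ (a + 1) * exp (-(b * t)))) b := by
    filter_upwards [ae_restrict_mem measurableSet_Ioi] with t (ht : 0 < t) b _
    have hexp : HasDerivAt (fun b : ℂ => exp (-(b * t))) (exp (-(b * t)) * -(t : ℂ)) b :=
      ((hasDerivAt_mul_const (t : ℂ)).neg).cexp
    refine (hexp.const_mul ((t : ℂ) ^ a)).congr_deriv ?_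
    rw [cpow_add _ _ (ofReal_ne_zero.mpr ht.ne'), cpow_one]
    ring
  have hdom : IntegrableOn (fun t : ℝ => t ^ (a.re + 1) * Real.exp (-(ε * t))) (Ioi 0) := by
    simpa [Real.rpow_one] using
      integrableOn_rpow_mul_exp_neg_mul_rpow (by linarith : -1 < a.re + 1) zero_lt_one hε
  exact (hasDerivAt_integral_of_dominated_loc_of_deriv_le hnhds
    (F' := fun b t => -((t : ℂ) ^ (a + 1) * exp (-(b * t))))
    (Eventually.of_forall (hmeas a)) (integrableOn_cpow_mul_exp_neg_mul_Ioi ha hb₀)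
    (hmeas (a + 1) b₀).neg hbound hdom hderiv).2.differentiableAt.differentiableWithinAt

lemma integral_cpow_mul_exp_neg_mul_Ioi_of_re_pos {a b : ℂ} (ha : 0 < a.re) (hb : 0 < b.re) :
    ∫ t in Ioi (0 : ℝ), (t : ℂ) ^ (a - 1) * exp (-(b * t)) = (1 / b) ^ a * Gamma a := by
  have hopen : IsOpen {b : ℂ | 0 < b.re} := continuous_re.isOpen_preimage _ isOpen_Ioi
  have hlhs : AnalyticOnNhd ℂ
      (fun b : ℂ => ∫ t in Ioi (0 : ℝ), (t : ℂ) ^ (a - 1) * exp (-(b * t))) {b | 0 < b.re} :=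
    (differentiableOn_integral_cpow_mul_exp_neg_mul_Ioi (by simpa using ha)).analyticOnNhd hopen
  have hrhs : AnalyticOnNhd ℂ (fun b : ℂ => (1 / b) ^ a * Gamma a) {b | 0 < b.re} := by
    refine DifferentiableOn.analyticOnNhd (fun b (hb : 0 < b.re) => ?_) hopen
    have hb₀ : b ≠ 0 := fun h => by simp [h] at hb
    have hslit : 1 / b ∈ slitPlane := by
      rw [mem_slitPlane_iff, one_div, inv_re]
      exact Or.inl (div_pos hb (normSq_pos.mpr hb₀))
    exact (((differentiableAt_const 1).div differentiableAt_id hb₀).cpow_const hslit).mul_const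
      _ |>.differentiableWithinAt
  have hreal : ∃ᶠ b in 𝓝[≠] (1 : ℂ), (∫ t in Ioi (0 : ℝ), (t : ℂ) ^ (a - 1) * exp (-(b * t)))
      = (1 / b) ^ a * Gamma a := by
    have hpos : ∀ᶠ r : ℝ in 𝓝[≠] 1, 0 < r :=
      eventually_nhdsWithin_of_eventually_nhds (lt_mem_nhds one_pos)
    refine (continuous_ofReal.continuousWithinAt.tendsto_nhdsWithin fun r hr => ?_).frequently
      (hpos.mono fun r hr => integral_cpow_mul_exp_neg_mul_Ioi ha hr).frequently
    simpa using hr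
  exact hlhs.eqOn_of_preconnected_of_frequently_eq hrhs
    (convex_halfSpace_re_gt 0).isPreconnected (by simp) hreal hb

lemma one_div_neg_I_mul_ofReal_cpow {ω : ℝ} (hω : 0 < ω) (a : ℂ) :
    (1 / -(I * ω)) ^ a = exp (I * a * Real.pi / 2) / (ω : ℂ) ^ a := by
  have hI : 1 / -(I * ω) = I * ((ω⁻¹ : ℝ) : ℂ) := by
    rw [ofReal_inv, one_div, neg_inv.symm, mul_inv, inv_I]
    ring
  rw [hI, cpow_def_of_ne_zero (by simp [hω.ne']), log_mul_ofReal _ (inv_pos.mpr hω) _ I_ne_zero,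
    log_I, Real.log_inv, cpow_def_of_ne_zero (ofReal_ne_zero.mpr hω.ne'), ← ofReal_log hω.le,
    eq_div_iff (exp_ne_zero _), ← exp_add]
  congr 1
  push_cast
  ring

end Complex

open Complex Topology

lemma hasAbelLimit_congr {f g : ℝ → ℂ} {L : ℂ} (h : EqOn f g (Ioi 0)) :
    HasAbelLimit f L ↔ HasAbelLimit g L := by
  have hmul : ∀ s : ℝ, EqOn (fun x : ℝ => exp (-(s : ℂ) * x) * f x)
      (fun x : ℝ => exp (-(s : ℂ) * x) * g x) (Ioi 0) :=
    fun s x hx => by simp only [h hx]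
  unfold HasAbelLimit
  simp only [integrableOn_congr_fun (hmul _) measurableSet_Ioi,
    setIntegral_congr_fun measurableSet_Ioi (hmul _)]

lemma hasAbelLimit_mul_cexp_of_laplace {f : ℝ → ℂ} {F : ℂ → ℂ} {ω : ℝ}
    (hf : ∀ b : ℂ, 0 < b.re → IntegrableOn (fun x : ℝ => f x * exp (-(b * x))) (Ioi 0))
    (hF : ∀ b : ℂ, 0 < b.re → ∫ x in Ioi (0 : ℝ), f x * exp (-(b * x)) = F b)
    (hcont : ContinuousWithinAt F {b | 0 < b.re} (-(I * ω))) :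
    HasAbelLimit (fun x : ℝ => f x * exp (I * ω * x)) (F (-(I * ω))) := by
  have hshift : ∀ s x : ℝ, exp (-(s : ℂ) * x) * (f x * exp (I * ω * x))
      = f x * exp (-(((s : ℂ) - I * ω) * x)) := by
    intro s x
    rw [mul_left_comm, ← exp_add]
    ring_nf
  have hre : ∀ s : ℝ, 0 < s → 0 < ((s : ℂ) - I * ω).re := fun s hs => by simpa using hs
  refine ⟨fun s hs => by simpa only [hshift] using hf _ (hre s hs), ?_⟩
  have hpath : Tendsto (fun s : ℝ => (s : ℂ) - I * ω) (𝓝[>] 0)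
      (𝓝[{b | 0 < b.re}] (-(I * ω))) := by
    refine tendsto_nhdsWithin_iff.mpr ⟨?_, eventually_nhdsWithin_of_forall hre⟩
    exact ((by fun_prop : Continuous fun s : ℝ => (s : ℂ) - I * ω).tendsto' 0 _
      (by simp)).mono_left nhdsWithin_le_nhds
  refine (hcont.tendsto.comp hpath).congr' ?_
  filter_upwards [self_mem_nhdsWithin] with s hs
  simp only [Function.comp_apply, hshift, hF _ (hre s hs)]

lemma hasAbelLimit_cpow_mul_cexp {a : ℂ} {ω : ℝ} (ha : 0 < a.re) (hω : ω ≠ 0) :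
    HasAbelLimit (fun x : ℝ => (x : ℂ) ^ (a - 1) * exp (I * ω * x))
      ((1 / -(I * ω)) ^ a * Gamma a) := by
  refine hasAbelLimit_mul_cexp_of_laplace
    (fun b hb => integrableOn_cpow_mul_exp_neg_mul_Ioi (by simpa using ha) hb)
    (fun b hb => integral_cpow_mul_exp_neg_mul_Ioi_of_re_pos ha hb) ?_
  have hslit : 1 / -(I * ω) ∈ slitPlane := by
    rw [mem_slitPlane_iff]
    right
    simp [hω]
  exact ((continuousAt_const.div continuousAt_id (by simp [hω])).cpow continuousAt_const
    hslit).mul continuousAt_const |>.continuousWithinAt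

/-- Abel limit of `∫₀^∞ x^μ e^{iωx} dx`. -/
theorem abel_limit_power_fourier (μ ω : ℝ) (hμ : -1 < μ) (hω : 0 < ω) :
    HasAbelLimit (fun x : ℝ => ((x ^ μ : ℝ) : ℂ) * Complex.exp (Complex.I * (ω : ℂ) * (x : ℂ)))
      ((Real.Gamma (μ + 1) : ℂ) * Complex.exp (Complex.I * ((μ : ℂ) + 1) * (Real.pi : ℂ) / 2)
        / ((ω ^ (μ + 1) : ℝ) : ℂ)) := by
  have hpow : EqOn (fun x : ℝ => ((x ^ μ : ℝ) : ℂ) * exp (I * ω * x))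
      (fun x : ℝ => (x : ℂ) ^ ((μ + 1 : ℂ) - 1) * exp (I * ω * x)) (Ioi 0) := fun x hx => by
    simp only [add_sub_cancel_right, ofReal_cpow (le_of_lt hx)]
  have hvalue : (1 / -(I * ω)) ^ (μ + 1 : ℂ) * Gamma (μ + 1) = (Real.Gamma (μ + 1) : ℂ) *
      exp (I * ((μ : ℂ) + 1) * Real.pi / 2) / ((ω ^ (μ + 1) : ℝ) : ℂ) := by
    rw [one_div_neg_I_mul_ofReal_cpow hω, ofReal_cpow hω.le, ← Gamma_ofReal]
    push_cast
    ring
  rw [hasAbelLimit_congr hpow, ← hvalue]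
  exact hasAbelLimit_cpow_mul_cexp (by simp only [add_re, ofReal_re, one_re]; linarith) hω.ne'

end
end

section
/- Let μ > −1 be real and ω > 0. Suppose f is holomorphic on an open set containing {z ∈ ℂ : Re z ≥ 0} \ {0}, there exist K > 0 and σ ∈ ℝ with |f(z)| ≤ K|z|^σ for all z in that set with |z| ≥ 1, and there exists M > 0 with |f(z)| ≤ M for all z in that set with 0 < |z| ≤ 1. Then the Abel limit of ∫₀^∞ f(x) x^μ e^{iωx} dx exists and equals e^{i(μ+1)π/2} ∫₀^∞ f(ix) x^μ e^{−ωx} dx, the latter integral being absolutely convergent. -/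
open MeasureTheory Filter Set Polynomial
open scoped Classical

noncomputable section

/-! The damped integrand `e^{-sx} f(x) x^μ e^{iωx}` is the restriction to `(0, ∞)` of
`F_s(z) = e^{-sz} f(z) z^μ e^{iωz}`, holomorphic on the closed first quadrant minus `0`, where
it is `O(|z|^μ)` at `0` and decays like `e^{-min(s, ω)|z|}` at `∞` for `s > 0`. After the
substitution `z = e^w`, Cauchy's theorem on long rectangles in the strip `0 ≤ Im w ≤ π/2` rotates
the half-line integral onto the imaginary axis, where
`i F_s(ix) = e^{i(μ+1)π/2} f(ix) x^μ e^{-ωx} e^{-isx}`. The last factor is unimodular, so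
dominated convergence gives the limit `s → 0⁺`. -/

open scoped Topology Real Complex
open Complex (I)

section ExpSubstitution

variable {E : Type*} [NormedAddCommGroup E] [NormedSpace ℝ E]

lemma integrableOn_Ioi_iff_integrable_exp_smul_comp_exp (g : ℝ → E) :
    IntegrableOn g (Ioi 0) ↔ Integrable fun u : ℝ => rexp u • g (rexp u) := by
  have := integrableOn_image_iff_integrableOn_abs_deriv_smul MeasurableSet.univ
    (fun x _ => (Real.hasDerivAt_exp x).hasDerivWithinAt) Real.exp_injective.injOn g
  simpa [Real.range_exp, abs_of_pos (Real.exp_pos _)] using this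

lemma integral_Ioi_eq_integral_exp_smul_comp_exp (g : ℝ → E) :
    ∫ x in Ioi 0, g x = ∫ u : ℝ, rexp u • g (rexp u) := by
  have := integral_image_eq_integral_abs_deriv_smul MeasurableSet.univ
    (fun x _ => (Real.hasDerivAt_exp x).hasDerivWithinAt) Real.exp_injective.injOn g
  simpa [Real.range_exp, abs_of_pos (Real.exp_pos _)] using this

end ExpSubstitution

lemma integrableOn_Ioi_comp_of_norm_le {E : Type*} [NormedAddCommGroup E] {F : ℂ → E}
    {S : Set ℂ} {γ : ℝ → ℂ} {ψ : ℝ → ℝ} (hF : ContinuousOn F S) (hγ : Continuous γ)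
    (hγS : MapsTo γ (Ioi 0) S) (hψ : IntegrableOn ψ (Ioi 0))
    (hle : ∀ x ∈ Ioi (0 : ℝ), ‖F (γ x)‖ ≤ ψ x) : IntegrableOn (fun x => F (γ x)) (Ioi 0) :=
  hψ.mono' ((hF.comp hγ.continuousOn hγS).aestronglyMeasurable measurableSet_Ioi)
    ((ae_restrict_iff' measurableSet_Ioi).2 (.of_forall hle))

lemma tendsto_integral_mul_exp_neg_mul_I {ν : Measure ℝ} {g : ℝ → ℂ} (hg : Integrable g ν) :
    Tendsto (fun s : ℝ => ∫ x, g x * cexp (-s * I * x) ∂ν) (𝓝 0) (𝓝 (∫ x, g x ∂ν)) := by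
  have hcont : Continuous fun s : ℝ => ∫ x, g x * cexp (-s * I * x) ∂ν := by
    refine continuous_of_dominated (fun s => hg.aestronglyMeasurable.mul
      (by fun_prop : Continuous fun x : ℝ => cexp (-s * I * x)).aestronglyMeasurable)
      (fun s => .of_forall fun x => ?_) hg.norm (.of_forall fun x => by fun_prop)
    simp [Complex.norm_exp]
  simpa using hcont.tendsto 0

lemma norm_le_add_mul_rpow_max_of_bounds {α F : Type*} [SeminormedAddGroup α] [Norm F]
    {f : α → F} {S : Set α} {M K σ : ℝ} (hM : 0 ≤ M) (hK : 0 ≤ K)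
    (hgrow : ∀ z ∈ S, 1 ≤ ‖z‖ → ‖f z‖ ≤ K * ‖z‖ ^ σ) (hbdd : ∀ z ∈ S, ‖z‖ ≤ 1 → ‖f z‖ ≤ M)
    {z : α} (hz : z ∈ S) : ‖f z‖ ≤ M + K * ‖z‖ ^ max σ 0 := by
  rcases le_total ‖z‖ 1 with h | h
  · have : 0 ≤ K * ‖z‖ ^ max σ 0 := by positivity
    linarith [hbdd z hz h]
  · have : K * ‖z‖ ^ σ ≤ K * ‖z‖ ^ max σ 0 := by
      gcongr
      exact le_max_left σ 0
    linarith [hgrow z hz h]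

section Strip

variable {E : Type*} [NormedAddCommGroup E] [NormedSpace ℂ E]

theorem integral_eq_integral_add_mul_I_of_strip {h : ℂ → E} {b : ℝ} (hb : 0 ≤ b)
    (hd : DifferentiableOn ℂ h (univ ×ℂ Icc 0 b)) {φ : ℝ → ℝ} (hφ : Integrable φ)
    (hφ_top : Tendsto φ atTop (𝓝 0)) (hφ_bot : Tendsto φ atBot (𝓝 0))
    (hle : ∀ w ∈ univ ×ℂ Icc 0 b, ‖h w‖ ≤ φ w.re) :
    ∫ u : ℝ, h u = ∫ u : ℝ, h (u + b * I) := by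
  have mem {u y : ℝ} (hy : y ∈ Icc 0 b) : (u + y * I : ℂ) ∈ univ ×ℂ Icc 0 b := by
    simpa [Complex.mem_reProdIm] using hy
  have hline {y : ℝ} (hy : y ∈ Icc 0 b) : Integrable fun u : ℝ => h (u + y * I) :=
    hφ.mono'
      ((hd.continuousOn.comp_continuous (by fun_prop) fun _ => mem hy).aestronglyMeasurable)
      (.of_forall fun u => by simpa using hle _ (mem hy))
  have hside {l : Filter ℝ} (hφl : Tendsto φ l (𝓝 0)) :
      Tendsto (fun T : ℝ => ∫ y in (0 : ℝ)..b, h (T + y * I)) l (𝓝 0) := by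
    refine squeeze_zero_norm (a := fun T => φ T * |b - 0|) (fun T => ?_)
      (by simpa using hφl.mul_const |b - 0|)
    refine intervalIntegral.norm_integral_le_of_norm_le_const fun y hy => ?_
    rw [uIoc_of_le hb] at hy
    simpa using hle _ (mem (Ioc_subset_Icc_self hy))
  have hrect (T : ℝ) :=
    Complex.integral_boundary_rect_eq_zero_of_differentiableOn h ⟨-T, 0⟩ ⟨T, b⟩
      (hd.mono fun w hw => ⟨trivial, by simpa [uIcc_of_le hb] using hw.2⟩)
  have hlim :=
    (intervalIntegral_tendsto_integral (hline ⟨le_rfl, hb⟩) tendsto_neg_atTop_atBot tendsto_id).sub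
      (intervalIntegral_tendsto_integral (hline ⟨hb, le_rfl⟩) tendsto_neg_atTop_atBot tendsto_id)
  have hzero : Tendsto (fun T : ℝ => I • (∫ y in (0 : ℝ)..b, h (-T + y * I)) -
      I • ∫ y in (0 : ℝ)..b, h (T + y * I)) atTop (𝓝 0) := by
    simpa using ((hside hφ_bot).comp tendsto_neg_atTop_atBot).const_smul I |>.sub
      ((hside hφ_top).const_smul I)
  have := tendsto_nhds_unique hlim (hzero.congr fun T => by
    have := hrect T
    simp only [Complex.ofReal_neg, Complex.ofReal_zero, zero_mul, add_zero, id_eq] at this ⊢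
    rw [eq_comm, ← sub_eq_zero, ← this]
    abel)
  simpa [sub_eq_zero] using this

end Strip

local notation "𝒬" => (Ici (0 : ℝ) ×ℂ Ici (0 : ℝ)) \ ({0} : Set ℂ)

section Quadrant

variable {E : Type*} [NormedAddCommGroup E] [NormedSpace ℂ E]

lemma mapsTo_exp_strip_quadrant :
    MapsTo cexp (univ ×ℂ Icc 0 (π / 2)) 𝒬 := by
  intro w ⟨_, hv⟩
  refine ⟨⟨?_, ?_⟩, Complex.exp_ne_zero w⟩
  · simpa [Complex.exp_re] using mul_nonneg (Real.exp_pos w.re).le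
      (Real.cos_nonneg_of_mem_Icc ⟨by linarith [Real.pi_pos, hv.1], hv.2⟩)
  · simpa [Complex.exp_im] using mul_nonneg (Real.exp_pos w.re).le
      (Real.sin_nonneg_of_nonneg_of_le_pi hv.1 (by linarith [Real.pi_pos, hv.2]))

lemma quadrant_subset_slitPlane : 𝒬 ⊆ Complex.slitPlane := by
  rintro z ⟨⟨hre, -⟩, hz⟩
  rcases (show 0 ≤ z.re from hre).eq_or_lt with hre | hre
  · exact Or.inr fun him => hz (Complex.ext hre.symm him)
  · exact Or.inl hre

lemma min_mul_norm_le_add {a b : ℝ} (ha : 0 ≤ a) (hb : 0 ≤ b) {z : ℂ} (hre : 0 ≤ z.re)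
    (him : 0 ≤ z.im) : min a b * ‖z‖ ≤ a * z.re + b * z.im := by
  have hz : ‖z‖ ≤ z.re + z.im := by
    simpa [abs_of_nonneg hre, abs_of_nonneg him] using Complex.norm_le_abs_re_add_abs_im z
  have : min a b * ‖z‖ ≤ min a b * (z.re + z.im) := by gcongr
  nlinarith [min_le_left a b, min_le_right a b]

/-- Substituting `z = exp w` maps the strip `0 ≤ Im w ≤ π/2` onto `𝒬`; the limits of `r ψ r`
make the substituted integrand vanish at both ends of the strip. -/
theorem integral_Ioi_eq_I_smul_integral_Ioi_I_mul {F : ℂ → E}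
    (hF : DifferentiableOn ℂ F 𝒬) {ψ : ℝ → ℝ}
    (hψ : IntegrableOn ψ (Ioi 0)) (hψ_zero : Tendsto (fun r => r * ψ r) (𝓝[>] 0) (𝓝 0))
    (hψ_top : Tendsto (fun r => r * ψ r) atTop (𝓝 0))
    (hle : ∀ z ∈ 𝒬, ‖F z‖ ≤ ψ ‖z‖) :
    ∫ x in Ioi (0 : ℝ), F x = I • ∫ x in Ioi (0 : ℝ), F (I * x) := by
  have hstrip := integral_eq_integral_add_mul_I_of_strip (h := fun w => cexp w • F (cexp w))
    (φ := fun u => rexp u * ψ (rexp u)) (by positivity)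
    (Complex.differentiable_exp.differentiableOn.smul
      (hF.comp Complex.differentiable_exp.differentiableOn mapsTo_exp_strip_quadrant))
    ((integrableOn_Ioi_iff_integrable_exp_smul_comp_exp ψ).1 hψ)
    (hψ_top.comp Real.tendsto_exp_atTop) (hψ_zero.comp Real.tendsto_exp_atBot_nhdsGT)
    fun w hw => by
      have := hle _ (mapsTo_exp_strip_quadrant hw)
      rw [Complex.norm_exp] at this
      rw [norm_smul, Complex.norm_exp]
      gcongr
  have hexp (u : ℝ) : cexp (u + (π / 2 : ℝ) * I) = I * rexp u := by
    push_cast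
    rw [Complex.exp_add, Complex.exp_pi_div_two_mul_I, mul_comm]
  rw [integral_Ioi_eq_integral_exp_smul_comp_exp, integral_Ioi_eq_integral_exp_smul_comp_exp,
    ← integral_smul]
  convert hstrip using 3
  · rw [← Complex.ofReal_exp, Complex.coe_smul]
  · rw [hexp, mul_smul, Complex.coe_smul]

end Quadrant

section GrowthWeight

/-- Majorant of `|f(z) z^μ| e^{-m|z|}` at `r = |z|` when `|f(z)| ≤ M + K |z|^τ`. -/
def growthWeight (M K τ μ m r : ℝ) : ℝ := (M + K * r ^ τ) * r ^ μ * rexp (-m * r)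

variable {M K τ μ m : ℝ}

lemma growthWeight_eq {r : ℝ} (hr : 0 < r) :
    growthWeight M K τ μ m r =
      M * (r ^ μ * rexp (-m * r)) + K * (r ^ (τ + μ) * rexp (-m * r)) := by
  rw [growthWeight, Real.rpow_add hr]
  ring

lemma mul_growthWeight_eq {r : ℝ} (hr : 0 < r) :
    r * growthWeight M K τ μ m r =
      M * (r ^ (μ + 1) * rexp (-m * r)) + K * (r ^ (τ + μ + 1) * rexp (-m * r)) := by
  rw [growthWeight_eq hr, Real.rpow_add_one hr.ne', Real.rpow_add_one hr.ne']
  ring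

lemma integrableOn_growthWeight (hμ : -1 < μ) (hτ : 0 ≤ τ) (hm : 0 < m) :
    IntegrableOn (growthWeight M K τ μ m) (Ioi 0) := by
  have h (a : ℝ) (ha : -1 < a) :
      IntegrableOn (fun r : ℝ => r ^ a * rexp (-m * r)) (Ioi 0) := by
    simpa using integrableOn_rpow_mul_exp_neg_mul_rpow ha one_pos hm
  exact IntegrableOn.congr_fun
    (((h μ hμ).const_mul M).add ((h (τ + μ) (by linarith)).const_mul K))
    (fun r hr => (growthWeight_eq hr).symm) measurableSet_Ioi

lemma tendsto_mul_growthWeight_nhdsGT_zero (hμ : -1 < μ) (hτ : 0 ≤ τ) :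
    Tendsto (fun r => r * growthWeight M K τ μ m r) (𝓝[>] 0) (𝓝 0) := by
  have h (a : ℝ) (ha : 0 < a) :
      Tendsto (fun r : ℝ => r ^ a * rexp (-m * r)) (𝓝[>] 0) (𝓝 0) := by
    have := ((Real.continuous_rpow_const ha.le).tendsto 0).mul
      ((by fun_prop : Continuous fun r : ℝ => rexp (-m * r)).tendsto 0)
    simpa [Real.zero_rpow ha.ne'] using this.mono_left nhdsWithin_le_nhds
  have := ((h (μ + 1) (by linarith)).const_mul M).add
    ((h (τ + μ + 1) (by linarith)).const_mul K)
  rw [mul_zero, mul_zero, add_zero] at this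
  refine this.congr' ?_
  filter_upwards [self_mem_nhdsWithin] with r (hr : 0 < r)
  rw [mul_growthWeight_eq hr]

lemma tendsto_mul_growthWeight_atTop (hm : 0 < m) :
    Tendsto (fun r => r * growthWeight M K τ μ m r) atTop (𝓝 0) := by
  have h (a : ℝ) := tendsto_rpow_mul_exp_neg_mul_atTop_nhds_zero a m hm
  have := ((h (μ + 1)).const_mul M).add ((h (τ + μ + 1)).const_mul K)
  rw [mul_zero, mul_zero, add_zero] at this
  refine this.congr' ?_
  filter_upwards [eventually_gt_atTop 0] with r hr
  rw [mul_growthWeight_eq hr]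

end GrowthWeight

section FourierRotation

/-- The holomorphic extension of the damped integrand `e^{-sx} f(x) x^μ e^{iωx}`, with the
principal branch of `z^μ`. -/
def dampedFourierIntegrand (f : ℂ → ℂ) (μ ω s : ℝ) (z : ℂ) : ℂ :=
  cexp (-s * z) * (f z * z ^ (μ : ℂ) * cexp (I * ω * z))

variable {f : ℂ → ℂ} {μ ω s : ℝ}

lemma dampedFourierIntegrand_ofReal {x : ℝ} (hx : 0 ≤ x) :
    dampedFourierIntegrand f μ ω s x =
      cexp (-s * x) * (f x * ((x ^ μ : ℝ) : ℂ) * cexp (I * ω * x)) := by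
  rw [dampedFourierIntegrand, Complex.ofReal_cpow hx]

lemma I_mul_ofReal_cpow {x : ℝ} (hx : 0 < x) (a : ℝ) :
    (I * x) ^ (a : ℂ) = cexp (a * π / 2 * I) * ((x ^ a : ℝ) : ℂ) := by
  rw [mul_comm, Complex.cpow_def_of_ne_zero (by simp [hx.ne']), Complex.log_ofReal_mul hx
    Complex.I_ne_zero, Complex.log_I, Complex.ofReal_cpow hx.le,
    Complex.cpow_def_of_ne_zero (by simp [hx.ne']), Complex.ofReal_log hx.le, ← Complex.exp_add]
  ring_nf

lemma I_smul_dampedFourierIntegrand_I_mul {x : ℝ} (hx : 0 < x) :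
    I • dampedFourierIntegrand f μ ω s (I * x) =
      cexp (I * (μ + 1) * π / 2) *
        (f (I * x) * ((x ^ μ : ℝ) : ℂ) * ((rexp (-ω * x) : ℝ) : ℂ) *
          cexp (-s * I * x)) := by
  have hI : I = cexp (π / 2 * I) := Complex.exp_pi_div_two_mul_I.symm
  rw [dampedFourierIntegrand, I_mul_ofReal_cpow hx, smul_eq_mul]
  nth_rw 1 [hI]
  push_cast
  rw [show I * (μ + 1) * π / 2 = μ * π / 2 * I + π / 2 * I by ring, Complex.exp_add,
    show I * ω * (I * x) = -ω * x by linear_combination (ω * x : ℂ) * Complex.I_mul_I]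
  ring_nf

lemma differentiableOn_dampedFourierIntegrand {S : Set ℂ} (hf : DifferentiableOn ℂ f S)
    (hS : S ⊆ Complex.slitPlane) : DifferentiableOn ℂ (dampedFourierIntegrand f μ ω s) S := by
  unfold dampedFourierIntegrand
  have := differentiableOn_id.cpow_const (c := (μ : ℂ)) hS
  fun_prop

lemma norm_dampedFourierIntegrand_le {M K τ m : ℝ} {z : ℂ} (hfz : ‖f z‖ ≤ M + K * ‖z‖ ^ τ)
    (hm : m * ‖z‖ ≤ s * z.re + ω * z.im) :
    ‖dampedFourierIntegrand f μ ω s z‖ ≤ growthWeight M K τ μ m ‖z‖ := by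
  have hexp : ‖cexp (-s * z)‖ * ‖cexp (I * ω * z)‖ ≤ rexp (-m * ‖z‖) := by
    rw [Complex.norm_exp, Complex.norm_exp, ← Real.exp_add]
    gcongr
    simp only [Complex.mul_re, Complex.neg_re, Complex.ofReal_re, Complex.neg_im,
      Complex.ofReal_im, Complex.I_re, Complex.I_im, Complex.mul_im]
    linarith
  calc ‖dampedFourierIntegrand f μ ω s z‖
      = ‖f z‖ * ‖z‖ ^ μ * (‖cexp (-s * z)‖ * ‖cexp (I * ω * z)‖) := by
        rw [dampedFourierIntegrand, norm_mul, norm_mul, norm_mul, Complex.norm_cpow_real]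
        ring
    _ ≤ (M + K * ‖z‖ ^ τ) * ‖z‖ ^ μ * rexp (-m * ‖z‖) := by
        have := (norm_nonneg _).trans hfz
        gcongr

variable {M K τ : ℝ}

lemma integrableOn_Ioi_dampedFourierIntegrand (hf : DifferentiableOn ℂ f 𝒬)
    (hfle : ∀ z ∈ 𝒬, ‖f z‖ ≤ M + K * ‖z‖ ^ τ) (hμ : -1 < μ) (hτ : 0 ≤ τ) (hs : 0 < s) :
    IntegrableOn (fun x : ℝ =>
      cexp (-s * x) * (f x * ((x ^ μ : ℝ) : ℂ) * cexp (I * ω * x))) (Ioi 0) := by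
  have hQ {x : ℝ} (hx : 0 < x) : (x : ℂ) ∈ 𝒬 :=
    ⟨⟨by simpa using hx.le, by simp⟩, by simpa using hx.ne'⟩
  refine IntegrableOn.congr_fun (integrableOn_Ioi_comp_of_norm_le
    (differentiableOn_dampedFourierIntegrand (μ := μ) (ω := ω) (s := s) hf
      quadrant_subset_slitPlane).continuousOn Complex.continuous_ofReal (fun x hx => hQ hx)
    (integrableOn_growthWeight (M := M) (K := K) hμ hτ hs) fun x (hx : 0 < x) => ?_)
    (fun x (hx : 0 < x) => dampedFourierIntegrand_ofReal hx.le) measurableSet_Ioi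
  simpa [abs_of_pos hx] using norm_dampedFourierIntegrand_le (hfle _ (hQ hx))
    (m := s) (by simp [abs_of_pos hx])

lemma integrableOn_Ioi_rotatedFourierIntegrand (hf : DifferentiableOn ℂ f 𝒬)
    (hfle : ∀ z ∈ 𝒬, ‖f z‖ ≤ M + K * ‖z‖ ^ τ) (hμ : -1 < μ) (hτ : 0 ≤ τ) (hω : 0 < ω) :
    IntegrableOn (fun x : ℝ =>
      f (I * x) * ((x ^ μ : ℝ) : ℂ) * ((rexp (-ω * x) : ℝ) : ℂ)) (Ioi 0) := by
  have hQ {x : ℝ} (hx : 0 < x) : I * x ∈ 𝒬 :=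
    ⟨⟨by simp, by simpa using hx.le⟩, by simpa using hx.ne'⟩
  have := integrableOn_Ioi_comp_of_norm_le
    (differentiableOn_dampedFourierIntegrand (μ := μ) (ω := ω) (s := 0) hf
      quadrant_subset_slitPlane).continuousOn (by fun_prop) (fun x hx => hQ hx)
    (integrableOn_growthWeight (M := M) (K := K) hμ hτ hω) fun x (hx : 0 < x) => by
      simpa [abs_of_pos hx] using norm_dampedFourierIntegrand_le (hfle _ (hQ hx))
        (m := ω) (by simp [abs_of_pos hx])
  -- at `s = 0`, `I • F(I x)` is the rotated integrand times the unit `e^{i(μ+1)π/2}`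
  refine IntegrableOn.congr_fun ((this.const_mul I).const_mul
    (cexp (I * (μ + 1) * π / 2))⁻¹) (fun x (hx : 0 < x) => ?_) measurableSet_Ioi
  have := I_smul_dampedFourierIntegrand_I_mul (f := f) (μ := μ) (ω := ω) (s := 0) hx
  rw [smul_eq_mul] at this
  rw [this, inv_mul_cancel_left₀ (Complex.exp_ne_zero _)]
  simp

lemma integral_Ioi_dampedFourierIntegrand_eq (hf : DifferentiableOn ℂ f 𝒬)
    (hfle : ∀ z ∈ 𝒬, ‖f z‖ ≤ M + K * ‖z‖ ^ τ) (hμ : -1 < μ) (hτ : 0 ≤ τ) (hω : 0 < ω)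
    (hs : 0 < s) :
    ∫ x in Ioi (0 : ℝ),
      cexp (-s * x) * (f x * ((x ^ μ : ℝ) : ℂ) * cexp (I * ω * x)) =
    cexp (I * (μ + 1) * π / 2) * ∫ x in Ioi (0 : ℝ),
      f (I * x) * ((x ^ μ : ℝ) : ℂ) * ((rexp (-ω * x) : ℝ) : ℂ) * cexp (-s * I * x) := by
  have hm : 0 < min s ω := lt_min hs hω
  rw [setIntegral_congr_fun measurableSet_Ioi fun x (hx : 0 < x) =>
      (dampedFourierIntegrand_ofReal hx.le).symm,
    integral_Ioi_eq_I_smul_integral_Ioi_I_mul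
      (differentiableOn_dampedFourierIntegrand hf quadrant_subset_slitPlane)
      (integrableOn_growthWeight (M := M) (K := K) hμ hτ hm)
      (tendsto_mul_growthWeight_nhdsGT_zero hμ hτ) (tendsto_mul_growthWeight_atTop hm)
      fun z hz => norm_dampedFourierIntegrand_le (hfle z hz)
        (min_mul_norm_le_add hs.le hω.le hz.1.1 hz.1.2),
    ← integral_smul, setIntegral_congr_fun measurableSet_Ioi fun x (hx : 0 < x) =>
      I_smul_dampedFourierIntegrand_I_mul hx, integral_const_mul]

end FourierRotation

theorem abel_limit_fourier_rotation_general (μ ω : ℝ) (hμ : -1 < μ) (hω : 0 < ω) (f : ℂ → ℂ)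
    (U : Set ℂ) (hUsub : {z : ℂ | 0 ≤ z.re} \ {0} ⊆ U)
    (hf : DifferentiableOn ℂ f U)
    (hgrow : ∃ K : ℝ, 0 < K ∧ ∃ σ : ℝ, ∀ z ∈ ({z : ℂ | 0 ≤ z.re} \ {0} : Set ℂ),
      1 ≤ ‖z‖ → ‖f z‖ ≤ K * ‖z‖ ^ σ)
    (hbdd : ∃ M : ℝ, 0 < M ∧ ∀ z ∈ ({z : ℂ | 0 ≤ z.re} \ {0} : Set ℂ),
      ‖z‖ ≤ 1 → ‖f z‖ ≤ M) :
    IntegrableOn (fun x : ℝ =>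
        f (Complex.I * (x : ℂ)) * ((x ^ μ : ℝ) : ℂ) * ((Real.exp (-ω * x) : ℝ) : ℂ))
      (Set.Ioi 0) ∧
    HasAbelLimit
      (fun x : ℝ => f (x : ℂ) * ((x ^ μ : ℝ) : ℂ) * Complex.exp (Complex.I * (ω : ℂ) * (x : ℂ)))
      (Complex.exp (Complex.I * ((μ : ℂ) + 1) * (Real.pi : ℂ) / 2) *
        ∫ x in Set.Ioi (0:ℝ),
          f (Complex.I * (x : ℂ)) * ((x ^ μ : ℝ) : ℂ) * ((Real.exp (-ω * x) : ℝ) : ℂ)) := by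
  obtain ⟨K, hK, σ, hgrow⟩ := hgrow
  obtain ⟨M, hM, hbdd⟩ := hbdd
  have hQ : 𝒬 ⊆ {z : ℂ | 0 ≤ z.re} \ {0} := fun z hz => ⟨hz.1.1, hz.2⟩
  have hfQ : DifferentiableOn ℂ f 𝒬 := hf.mono (hQ.trans hUsub)
  have hfle (z : ℂ) (hz : z ∈ 𝒬) : ‖f z‖ ≤ M + K * ‖z‖ ^ max σ 0 :=
    norm_le_add_mul_rpow_max_of_bounds hM.le hK.le hgrow hbdd (hQ hz)
  have hτ : 0 ≤ max σ 0 := le_max_right σ 0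
  have hrot := integrableOn_Ioi_rotatedFourierIntegrand hfQ hfle hμ hτ hω
  refine ⟨hrot, fun s hs => integrableOn_Ioi_dampedFourierIntegrand hfQ hfle hμ hτ hs, ?_⟩
  refine (((tendsto_integral_mul_exp_neg_mul_I hrot).mono_left nhdsWithin_le_nhds).const_mul
    _).congr' ?_
  filter_upwards [self_mem_nhdsWithin] with s hs
  exact (integral_Ioi_dampedFourierIntegrand_eq hfQ hfle hμ hτ hω hs).symm

/-- rotation of the integration path for the Fourier-type transform. -/
theorem abel_limit_fourier_rotation (μ ω : ℝ) (hμ : -1 < μ) (hω : 0 < ω) (f : ℂ → ℂ)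
    (U : Set ℂ) (hUopen : IsOpen U) (hUsub : {z : ℂ | 0 ≤ z.re} \ {0} ⊆ U)
    (hf : DifferentiableOn ℂ f U)
    (hgrow : ∃ K : ℝ, 0 < K ∧ ∃ σ : ℝ, ∀ z ∈ ({z : ℂ | 0 ≤ z.re} \ {0} : Set ℂ),
      1 ≤ ‖z‖ → ‖f z‖ ≤ K * ‖z‖ ^ σ)
    (hbdd : ∃ M : ℝ, 0 < M ∧ ∀ z ∈ ({z : ℂ | 0 ≤ z.re} \ {0} : Set ℂ),
      ‖z‖ ≤ 1 → ‖f z‖ ≤ M) :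
    IntegrableOn (fun x : ℝ =>
        f (Complex.I * (x : ℂ)) * ((x ^ μ : ℝ) : ℂ) * ((Real.exp (-ω * x) : ℝ) : ℂ))
      (Set.Ioi 0) ∧
    HasAbelLimit
      (fun x : ℝ => f (x : ℂ) * ((x ^ μ : ℝ) : ℂ) * Complex.exp (Complex.I * (ω : ℂ) * (x : ℂ)))
      (Complex.exp (Complex.I * ((μ : ℂ) + 1) * (Real.pi : ℂ) / 2) *
        ∫ x in Set.Ioi (0:ℝ),
          f (Complex.I * (x : ℂ)) * ((x ^ μ : ℝ) : ℂ) * ((Real.exp (-ω * x) : ℝ) : ℂ)) :=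
  abel_limit_fourier_rotation_general μ ω hμ hω f U hUsub hf hgrow hbdd
end
end

section
/- Let μ, ν ∈ ℝ with μ + ν > −1 and μ − ν a nonnegative integer. Then for every integer k ≥ 0: if μ − ν is even, ∫₀^∞ x^k w_{μ,ν}(x) dx = Γ(k + (μ−ν+1)/2) Γ(k + (μ+ν+1)/2) 2^{2k+μ−1}; if μ − ν is odd, ∫₀^∞ x^k w_{μ,ν}(x) dx = Γ(k + (μ−ν+2)/2) Γ(k + (μ+ν+2)/2) 2^{2k+μ}. -/
open MeasureTheory Filter Set Polynomial
open scoped Classical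

noncomputable section

/-! Substituting `x = u²` turns the `k`-th moment into the Mellin transform
`∫₀^∞ u^(s-1) K_ν(u) du` with `s = 2k + μ + 1` (even case) or `s = 2k + μ + 2` (odd case).
Inserting the integral representation of `K_ν` and integrating in `u` first gives
`Γ(s) ∫₀^∞ cosh(νt) cosh(t)^(-s) dt`. Since the integrand is even and `cosh(νt)` is the mean of
`e^{±νt}`, this is half of `∫_ℝ e^{νt} cosh(t)^(-s) dt`, which the substitution
`y = σ(2t) = e^t / (2 cosh t)` (`σ` the logistic sigmoid) turns into `2^(s-1) B((s+ν)/2, (s-ν)/2)`.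
Hence `∫₀^∞ u^(s-1) K_ν(u) du = 2^(s-2) Γ((s+ν)/2) Γ((s-ν)/2)`. -/

open Real

lemma ofReal_rpow_mul_one_sub_rpow {x : ℝ} (hx : x ∈ Ioo (0:ℝ) 1) (a b : ℝ) :
    ((x ^ (a - 1) * (1 - x) ^ (b - 1) : ℝ) : ℂ)
      = (x : ℂ) ^ ((a : ℂ) - 1) * (1 - (x : ℂ)) ^ ((b : ℂ) - 1) := by
  rw [Complex.ofReal_mul, Complex.ofReal_cpow hx.1.le, Complex.ofReal_cpow (sub_nonneg.2 hx.2.le)]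
  push_cast
  rfl

lemma integrableOn_rpow_mul_one_sub_rpow {a b : ℝ} (ha : 0 < a) (hb : 0 < b) :
    IntegrableOn (fun x : ℝ => x ^ (a - 1) * (1 - x) ^ (b - 1)) (Ioo 0 1) := by
  have h := Complex.betaIntegral_convergent (u := a) (v := b) (by simpa) (by simpa)
  rw [intervalIntegrable_iff_integrableOn_Ioo_of_le zero_le_one] at h
  refine IntegrableOn.congr_fun h.re (fun x hx => ?_) measurableSet_Ioo
  simp only [← ofReal_rpow_mul_one_sub_rpow hx, RCLike.re_to_complex, Complex.ofReal_re]

lemma integral_rpow_mul_one_sub_rpow {a b : ℝ} (ha : 0 < a) (hb : 0 < b) :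
    ∫ x in Ioo (0:ℝ) 1, x ^ (a - 1) * (1 - x) ^ (b - 1) = Gamma a * Gamma b / Gamma (a + b) := by
  have h := Complex.betaIntegral_eq_Gamma_mul_div (u := a) (v := b) (by simpa) (by simpa)
  rw [Complex.betaIntegral, intervalIntegral.integral_of_le zero_le_one,
    integral_Ioc_eq_integral_Ioo, ← setIntegral_congr_fun measurableSet_Ioo
      (fun x hx => ofReal_rpow_mul_one_sub_rpow hx a b), integral_complex_ofReal,
    ← Complex.ofReal_add, Complex.Gamma_ofReal, Complex.Gamma_ofReal, Complex.Gamma_ofReal] at h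
  exact_mod_cast h

lemma sigmoid_two_mul (t : ℝ) : sigmoid (2 * t) = exp t / (2 * cosh t) := by
  rw [sigmoid_def, cosh_eq]
  field_simp
  rw [add_mul, one_mul, ← exp_add]
  ring_nf

lemma one_sub_sigmoid_two_mul (t : ℝ) : 1 - sigmoid (2 * t) = exp (-t) / (2 * cosh t) := by
  rw [← sigmoid_neg, ← mul_neg, sigmoid_two_mul, cosh_neg]

/-- The right side is `|f' t| * g (f t)` for the substitution `f t = σ(2t)` into the beta
integrand `g y = y^(A-1) (1-y)^(B-1)`. -/
lemma exp_mul_mul_cosh_rpow_neg (A B t : ℝ) :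
    exp ((A - B) * t) * cosh t ^ (-(A + B)) = 2 ^ (A + B - 1) *
      (|2 * (sigmoid (2 * t) * (1 - sigmoid (2 * t)))| *
        (sigmoid (2 * t) ^ (A - 1) * (1 - sigmoid (2 * t)) ^ (B - 1))) := by
  have hσ := sigmoid_pos (2 * t)
  have hσ' : 0 < 1 - sigmoid (2 * t) := sub_pos.2 (sigmoid_lt_one _)
  have hc := cosh_pos t
  rw [abs_of_pos (by positivity), rpow_sub_one hσ.ne', rpow_sub_one hσ'.ne',
    one_sub_sigmoid_two_mul, sigmoid_two_mul, div_rpow (exp_pos _).le (by positivity),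
    div_rpow (exp_pos _).le (by positivity), ← exp_mul, ← exp_mul, rpow_neg hc.le,
    rpow_sub_one two_ne_zero, mul_rpow zero_le_two hc.le, mul_rpow zero_le_two hc.le,
    rpow_add two_pos, rpow_add hc, show (A - B) * t = t * A + -t * B by ring, exp_add]
  field_simp

lemma hasDerivAt_sigmoid_two_mul (t : ℝ) :
    HasDerivAt (fun t => sigmoid (2 * t)) (2 * (sigmoid (2 * t) * (1 - sigmoid (2 * t)))) t := by
  have := (hasDerivAt_sigmoid (2 * t)).comp t ((hasDerivAt_id t).const_mul 2)
  rwa [mul_one, mul_comm] at this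

lemma integrable_and_integral_exp_mul_mul_cosh_rpow_neg {A B : ℝ} (hA : 0 < A) (hB : 0 < B) :
    Integrable (fun t => exp ((A - B) * t) * cosh t ^ (-(A + B))) ∧
      ∫ t, exp ((A - B) * t) * cosh t ^ (-(A + B))
        = 2 ^ (A + B - 1) * (Gamma A * Gamma B / Gamma (A + B)) := by
  have hderiv : ∀ t ∈ univ, HasDerivWithinAt (fun t => sigmoid (2 * t))
      (2 * (sigmoid (2 * t) * (1 - sigmoid (2 * t)))) univ t :=
    fun t _ => (hasDerivAt_sigmoid_two_mul t).hasDerivWithinAt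
  have hinj : InjOn (fun t => sigmoid (2 * t)) univ :=
    (sigmoid_strictMono.comp (strictMono_mul_left_of_pos two_pos)).injective.injOn
  have himage : (fun t => sigmoid (2 * t)) '' univ = Ioo 0 1 := by
    rw [image_univ, ← range_sigmoid]
    exact (mul_left_surjective₀ two_ne_zero).range_comp sigmoid
  have hsubst := integral_image_eq_integral_abs_deriv_smul MeasurableSet.univ hderiv hinj
    (fun x => x ^ (A - 1) * (1 - x) ^ (B - 1))
  have hint := (integrableOn_image_iff_integrableOn_abs_deriv_smul MeasurableSet.univ hderiv hinj
    (fun x => x ^ (A - 1) * (1 - x) ^ (B - 1))).1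
    (himage ▸ integrableOn_rpow_mul_one_sub_rpow hA hB)
  simp only [himage, smul_eq_mul, integral_rpow_mul_one_sub_rpow hA hB, Measure.restrict_univ,
    integrableOn_univ] at hsubst hint
  simp only [exp_mul_mul_cosh_rpow_neg A B]
  exact ⟨hint.const_mul _, by rw [integral_const_mul, hsubst]⟩

section Mellin

variable {ν s : ℝ}

lemma integrableOn_and_integral_cosh_mul_mul_cosh_rpow_neg_Ioi (hν : |ν| < s) :
    IntegrableOn (fun t => cosh (ν * t) * cosh t ^ (-s)) (Ioi 0) ∧
      ∫ t in Ioi 0, cosh (ν * t) * cosh t ^ (-s)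
        = 2 ^ (s - 2) * (Gamma ((s + ν) / 2) * Gamma ((s - ν) / 2) / Gamma s) := by
  have hA : 0 < (s + ν) / 2 := by linarith [neg_abs_le ν]
  have hB : 0 < (s - ν) / 2 := by linarith [le_abs_self ν]
  obtain ⟨hint, hval⟩ := integrable_and_integral_exp_mul_mul_cosh_rpow_neg hA hB
  obtain ⟨hint', hval'⟩ := integrable_and_integral_exp_mul_mul_cosh_rpow_neg hB hA
  rw [show (s + ν) / 2 - (s - ν) / 2 = ν by ring,
    show (s + ν) / 2 + (s - ν) / 2 = s by ring] at hint hval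
  rw [show (s - ν) / 2 - (s + ν) / 2 = -ν by ring,
    show (s - ν) / 2 + (s + ν) / 2 = s by ring] at hint' hval'
  have hsplit : (fun t => cosh (ν * t) * cosh t ^ (-s))
      = fun t => (exp (ν * t) * cosh t ^ (-s) + exp (-ν * t) * cosh t ^ (-s)) / 2 := by
    ext t
    rw [cosh_eq, neg_mul]
    ring
  have hfull : ∫ t, cosh (ν * t) * cosh t ^ (-s)
      = 2 ^ (s - 2) * 2 * (Gamma ((s + ν) / 2) * Gamma ((s - ν) / 2) / Gamma s) := by
    rw [hsplit, integral_div, integral_add hint hint', hval, hval', ← rpow_add_one two_ne_zero]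
    ring_nf
  have heven : ∀ t, cosh (ν * |t|) * cosh |t| ^ (-s) = cosh (ν * t) * cosh t ^ (-s) := fun t => by
    rcases abs_choice t with h | h <;> simp [h]
  have hfold := integral_comp_abs (f := fun t => cosh (ν * t) * cosh t ^ (-s))
  simp only [heven, hfull] at hfold
  exact ⟨hsplit ▸ ((hint.add hint').div_const 2).integrableOn, by linarith⟩

lemma integral_rpow_mul_exp_neg_mul_cosh_mul_cosh (hs : 0 < s) (t : ℝ) :
    ∫ u in Ioi 0, u ^ (s - 1) * (exp (-u * cosh t) * cosh (ν * t))
      = Gamma s * (cosh (ν * t) * cosh t ^ (-s)) := by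
  have hc := cosh_pos t
  calc _ = (∫ u in Ioi 0, u ^ (s - 1) * exp (-(cosh t * u))) * cosh (ν * t) := by
        rw [← integral_mul_const]
        refine setIntegral_congr_fun measurableSet_Ioi fun u _ => ?_
        rw [neg_mul, mul_comm u]
        ring
    _ = _ := by
        rw [integral_rpow_mul_exp_neg_mul_Ioi hs hc, one_div, inv_rpow hc.le, ← rpow_neg hc.le]
        ring

lemma integrable_rpow_mul_exp_neg_mul_cosh_mul_cosh_prod (hν : |ν| < s) :
    Integrable (Function.uncurry fun t u => u ^ (s - 1) * (exp (-u * cosh t) * cosh (ν * t)))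
      ((volume.restrict (Ioi 0)).prod (volume.restrict (Ioi 0))) := by
  have hs : 0 < s := (abs_nonneg ν).trans_lt hν
  have hmeas : AEStronglyMeasurable
      (Function.uncurry fun t u => u ^ (s - 1) * (exp (-u * cosh t) * cosh (ν * t)))
      ((volume.restrict (Ioi 0)).prod (volume.restrict (Ioi 0))) := by
    rw [Measure.prod_restrict]
    refine ContinuousOn.aestronglyMeasurable ?_ (measurableSet_Ioi.prod measurableSet_Ioi)
    refine ContinuousOn.mul ?_ (Continuous.continuousOn (by fun_prop))
    exact continuous_snd.continuousOn.rpow_const fun p hp => Or.inl hp.2.ne'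
  have hinner : ∀ t, IntegrableOn (fun u => u ^ (s - 1) * (exp (-u * cosh t) * cosh (ν * t)))
      (Ioi 0) := fun t => by
    refine IntegrableOn.congr_fun ((integrableOn_rpow_mul_exp_neg_mul_rpow (s := s - 1)
      (by linarith) one_pos (cosh_pos t)).mul_const (cosh (ν * t))) (fun u _ => ?_)
      measurableSet_Ioi
    rw [rpow_one, neg_mul, neg_mul, mul_comm u]
    ring
  refine (integrable_prod_iff hmeas).2 ⟨ae_of_all _ hinner, ?_⟩
  -- The integrand is nonnegative, so its norm integrates in `u` to `Γ(s) cosh(νt) cosh(t)^(-s)`.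
  have hJ := (integrableOn_and_integral_cosh_mul_mul_cosh_rpow_neg_Ioi hν).1
  refine (hJ.const_mul (Gamma s)).congr (ae_of_all _ fun t => ?_)
  dsimp only
  rw [← integral_rpow_mul_exp_neg_mul_cosh_mul_cosh hs t]
  refine setIntegral_congr_fun measurableSet_Ioi fun u hu => ?_
  simp only [Function.uncurry_apply_pair, norm_eq_abs]
  have hu : 0 < u := hu
  exact (abs_of_nonneg (by have := cosh_pos (ν * t); positivity)).symm

theorem integral_rpow_mul_besselK (hν : |ν| < s) :
    ∫ u in Ioi 0, u ^ (s - 1) * besselK ν u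
      = Gamma ((s - ν) / 2) * Gamma ((s + ν) / 2) * 2 ^ (s - 2) := by
  have hs : 0 < s := (abs_nonneg ν).trans_lt hν
  calc ∫ u in Ioi 0, u ^ (s - 1) * besselK ν u
      = ∫ u in Ioi 0, ∫ t in Ioi 0, u ^ (s - 1) * (exp (-u * cosh t) * cosh (ν * t)) :=
        setIntegral_congr_fun measurableSet_Ioi fun u _ => (integral_const_mul _ _).symm
    _ = ∫ t in Ioi 0, ∫ u in Ioi 0, u ^ (s - 1) * (exp (-u * cosh t) * cosh (ν * t)) :=
        (integral_integral_swap (integrable_rpow_mul_exp_neg_mul_cosh_mul_cosh_prod hν)).symm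
    _ = Gamma s * ∫ t in Ioi 0, cosh (ν * t) * cosh t ^ (-s) := by
        simp only [integral_rpow_mul_exp_neg_mul_cosh_mul_cosh hs, integral_const_mul]
    _ = _ := by
        rw [(integrableOn_and_integral_cosh_mul_mul_cosh_rpow_neg_Ioi hν).2]
        field_simp [(Gamma_pos_of_pos hs).ne']

end Mellin

lemma integral_rpow_mul_besselK_sqrt (ν s : ℝ) :
    ∫ x in Ioi 0, x ^ (s / 2 - 1) * besselK ν (√x)
      = 2 * ∫ u in Ioi 0, u ^ (s - 1) * besselK ν u := by
  rw [← integral_comp_rpow_Ioi_of_pos (g := fun u => u ^ (s - 1) * besselK ν u) (p := 1 / 2)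
    (by norm_num), ← integral_const_mul]
  refine setIntegral_congr_fun measurableSet_Ioi fun x hx => ?_
  rw [smul_eq_mul, sqrt_eq_rpow, ← rpow_mul hx.le,
    show s / 2 - 1 = (1 / 2 - 1) + 1 / 2 * (s - 1) by ring, rpow_add hx]
  ring

lemma integral_pow_mul_half_rpow_mul_besselK_sqrt (k : ℕ) {p ν s : ℝ} (hν : |ν| < s)
    (hp : k + p = s / 2 - 1) :
    ∫ x in Ioi 0, x ^ k * (1 / 2 * x ^ p * besselK ν (√x))
      = Gamma ((s - ν) / 2) * Gamma ((s + ν) / 2) * 2 ^ (s - 2) := by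
  calc ∫ x in Ioi 0, x ^ k * (1 / 2 * x ^ p * besselK ν (√x))
      = 1 / 2 * ∫ x in Ioi 0, x ^ (s / 2 - 1) * besselK ν (√x) := by
        rw [← integral_const_mul]
        refine setIntegral_congr_fun measurableSet_Ioi fun x hx => ?_
        rw [← hp, rpow_add hx, rpow_natCast]
        ring
    _ = _ := by
        rw [integral_rpow_mul_besselK_sqrt, integral_rpow_mul_besselK hν]
        ring

theorem moments_weightW_general (μ ν : ℝ) (h1 : -1 < μ + ν) (k : ℕ) :
    ((∃ m : ℕ, μ - ν = 2 * m) →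
      ∫ x in Set.Ioi (0:ℝ), x ^ k * weightW μ ν x
        = Real.Gamma ((k : ℝ) + (μ - ν + 1)/2) * Real.Gamma ((k : ℝ) + (μ + ν + 1)/2) *
            2 ^ (2 * (k : ℝ) + μ - 1)) ∧
    ((∃ m : ℕ, μ - ν = 2 * m + 1) →
      ∫ x in Set.Ioi (0:ℝ), x ^ k * weightW μ ν x
        = Real.Gamma ((k : ℝ) + (μ - ν + 2)/2) * Real.Gamma ((k : ℝ) + (μ + ν + 2)/2) *
            2 ^ (2 * (k : ℝ) + μ)) := by
  have hk : (0 : ℝ) ≤ k := k.cast_nonneg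
  constructor
  · rintro ⟨m, hm⟩
    have hw : weightW μ ν = fun x => 1 / 2 * x ^ ((μ - 1) / 2) * besselK ν (√x) :=
      funext fun x => if_pos ⟨m, by rw [hm]; norm_cast⟩
    rw [hw, integral_pow_mul_half_rpow_mul_besselK_sqrt k (p := (μ - 1) / 2) (s := 2 * k + μ + 1)
      (abs_lt.2 ⟨by linarith, by linarith [m.cast_nonneg (α := ℝ)]⟩) (by ring)]
    ring_nf
  · rintro ⟨m, hm⟩
    have hodd : ¬ ∃ j : ℤ, μ - ν = 2 * j := fun ⟨j, hj⟩ => by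
      have : (2 * m + 1 : ℤ) = 2 * j := by exact_mod_cast hm.symm.trans hj
      omega
    have hw : weightW μ ν = fun x => 1 / 2 * x ^ (μ / 2) * besselK ν (√x) :=
      funext fun x => if_neg hodd
    rw [hw, integral_pow_mul_half_rpow_mul_besselK_sqrt k (p := μ / 2) (s := 2 * k + μ + 2)
      (abs_lt.2 ⟨by linarith, by linarith [m.cast_nonneg (α := ℝ)]⟩) (by ring)]
    ring_nf

/-- moments of the weight function `w_{μ,ν}`. -/
theorem moments_weightW (μ ν : ℝ) (h1 : -1 < μ + ν) (hint : ∃ m : ℕ, μ - ν = m) (k : ℕ) :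
    ((∃ m : ℕ, μ - ν = 2 * m) →
      ∫ x in Set.Ioi (0:ℝ), x ^ k * weightW μ ν x
        = Real.Gamma ((k : ℝ) + (μ - ν + 1)/2) * Real.Gamma ((k : ℝ) + (μ + ν + 1)/2) *
            2 ^ (2 * (k : ℝ) + μ - 1)) ∧
    ((∃ m : ℕ, μ - ν = 2 * m + 1) →
      ∫ x in Set.Ioi (0:ℝ), x ^ k * weightW μ ν x
        = Real.Gamma ((k : ℝ) + (μ - ν + 2)/2) * Real.Gamma ((k : ℝ) + (μ + ν + 2)/2) *
            2 ^ (2 * (k : ℝ) + μ)) :=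
  moments_weightW_general μ ν h1 k
end
end

section
/- Let ν be a nonnegative integer and k ≥ 1 an integer. Then the weight functions coincide: w_{ν+2k−1,ν}(x) = w_{ν+2k,ν}(x) = (1/2) x^{(ν+2k−1)/2} K_ν(√x) for all x > 0; and for any n-point Gaussian quadrature rule 0 < x_1 < ⋯ < x_n, w_1, …, w_n > 0 for this common weight, the generalized Gauss–Radau rules with parameters μ = ν+2k−1 and μ = ν+2k coincide: for every ω > 0 and every function f : ℂ → ℂ that is complex-differentiable at least ν+2k−1 times at 0, (Q_{2n,ν+2k−1} f)(ω) = (Q_{2n,ν+2k} f)(ω). -/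
open MeasureTheory Filter Set Polynomial
open scoped Classical

noncomputable section

/-- the rules with `μ = ν + 2k − 1` and `μ = ν + 2k` coincide. -/
theorem QRule_coincide (ν k : ℕ) (hk : 1 ≤ k) :
    (∀ x : ℝ, 0 < x →
      weightW ((ν + 2 * k - 1 : ℕ) : ℝ) (ν : ℝ) x = weightW ((ν + 2 * k : ℕ) : ℝ) (ν : ℝ) x ∧
      weightW ((ν + 2 * k : ℕ) : ℝ) (ν : ℝ) x
        = (1/2) * x ^ (((ν : ℝ) + 2 * (k : ℝ) - 1)/2) * besselK ν (Real.sqrt x)) ∧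
    ∀ n : ℕ, ∀ xs ws : Fin n → ℝ,
      IsGaussRule ((ν + 2 * k - 1 : ℕ) : ℝ) (ν : ℝ) n xs ws →
      ∀ f : ℂ → ℂ, ContDiffAt ℂ ((ν + 2 * k - 1 : ℕ) : ℕ∞) f 0 →
      ∀ ω : ℝ, 0 < ω →
        QRule (ν + 2 * k - 1) ν xs ws f ω = QRule (ν + 2 * k) ν xs ws f ω := by
  have hle : 1 ≤ ν + 2 * k := by omega
  have hcast : ((ν + 2 * k - 1 : ℕ) : ℝ) = (ν : ℝ) + 2 * k - 1 := by
    rw [Nat.cast_sub hle]; push_cast; ring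
  constructor
  · intro x hx
    have hodd : ¬ ∃ m : ℤ, ((ν + 2 * k - 1 : ℕ) : ℝ) - (ν : ℝ) = 2 * m := by
      rintro ⟨m, hm⟩
      rw [hcast] at hm
      have h1 : (2 * (k : ℝ) - 1) = 2 * (m : ℝ) := by linarith
      have h2 : (2 * (k : ℤ) - 1) = 2 * m := by exact_mod_cast h1
      omega
    have heven : ∃ m : ℤ, ((ν + 2 * k : ℕ) : ℝ) - (ν : ℝ) = 2 * m :=
      ⟨(k : ℤ), by push_cast; ring⟩
    have hexp1 : (((ν + 2 * k - 1 : ℕ) : ℝ)) / 2 = ((ν : ℝ) + 2 * k - 1) / 2 := by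
      rw [hcast]
    have hexp2 : (((ν + 2 * k : ℕ) : ℝ) - 1) / 2 = ((ν : ℝ) + 2 * k - 1) / 2 := by
      push_cast; ring
    constructor
    · simp only [weightW, if_neg hodd, if_pos heven, hexp1, hexp2]
    · simp only [weightW, if_pos heven, hexp2]
  · intro n xs ws hG f hf ω hω
    set M := ν + 2 * k - 1 with hM
    have hM1 : ν + 2 * k = M + 1 := by omega
    rw [hM1]
    have hκ : kappaQ M ν = kappaQ (M + 1) ν := by
      unfold kappaQ
      have h1 : ¬ Even (M - ν) := by
        have : M - ν = 2 * k - 1 := by omega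
        rw [this, Nat.even_sub (by omega)]
        simp [Nat.even_mul]
      have h2 : Even (M + 1 - ν) := by
        have : M + 1 - ν = 2 * k := by omega
        rw [this]; exact even_two_mul k
      rw [if_neg h1, if_pos h2]
      push_cast; ring
    have hw : ∀ m, wHat0 M ν xs ws m = wHat0 (M + 1) ν xs ws m := by
      intro m; unfold wHat0; rw [hκ]
    have hΓ : Real.Gamma (((ν : ℝ) - (M : ℕ) + 1) / 2) = 0 := by
      have h1 : ((ν : ℝ) - ((M : ℕ) : ℝ) + 1) / 2 = -(((k - 1 : ℕ) : ℝ)) := by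
        rw [hM, hcast, Nat.cast_sub hk]; push_cast; ring
      rw [h1]; exact Real.Gamma_neg_nat_eq_zero _
    have hcos : Real.cos ((((M : ℕ) : ℝ) - ν) * Real.pi / 2) = 0 := by
      have h1 : (((M : ℕ) : ℝ) - ν) * Real.pi / 2 = (k : ℝ) * Real.pi - Real.pi / 2 := by
        rw [hM, hcast]; ring
      rw [h1, Real.cos_sub, Real.cos_pi_div_two, Real.sin_pi_div_two, Real.sin_nat_mul_pi]
      ring
    have hz : wHat0 (M + 1) ν xs ws M = 0 := by
      unfold wHat0
      rw [hΓ, hcos]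
      simp
    unfold QRule
    rw [hκ, Finset.sum_range_succ, hz]
    have hsum : ∑ m ∈ Finset.range M,
          ((wHat0 M ν xs ws m : ℝ) : ℂ) / (ω : ℂ) ^ m * iteratedDeriv m f 0
        = ∑ m ∈ Finset.range M,
          ((wHat0 (M + 1) ν xs ws m : ℝ) : ℂ) / (ω : ℂ) ^ m * iteratedDeriv m f 0 :=
      Finset.sum_congr rfl (fun m _ => by rw [hw m])
    rw [hsum]
    simp

end
end
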